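/- arXiv:1609.06583 — 2 statements merged into one kernel-verified Lean document; each statement's English description precedes it below -/
import Mathlib

section
/- If the pair (A,B) is NOT ε-regular, witnessed by X ⊆ A, Y ⊆ B with |X| > ε|A|, |Y| > ε|B| and |d(X,Y) − d(A,B)| ≥ ε, then refining A into {X, A\X} and B into {Y, B\Y} strictly increases the mean-square density: Σ over the four pairs of (weight)·(density)² ≥ d(A,B)² + ε⁴, where the weight of a pair (S,T) is |S||T|/(|A||B|). -/
open Finset

noncomputable def eDens {V : Type*} [DecidableEq V] (G : SimpleGraph V)
    [DecidableRel G.Adj] (X Y : Finset V) : ℝ :=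
  ((G.interedges X Y).card : ℝ) / ((X.card : ℝ) * (Y.card : ℝ))

def IsEpsRegular {V : Type*} [DecidableEq V] (G : SimpleGraph V)
    [DecidableRel G.Adj] (ε : ℝ) (A B : Finset V) : Prop :=
  ∀ X ⊆ A, ∀ Y ⊆ B, ε * A.card < (X.card : ℝ) → ε * B.card < (Y.card : ℝ) →
    |eDens G X Y - eDens G A B| < ε

lemma interedges_union_left' {V : Type*} [DecidableEq V] (G : SimpleGraph V)
    [DecidableRel G.Adj] (s s' t : Finset V) :
    G.interedges (s ∪ s') t = G.interedges s t ∪ G.interedges s' t := by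
  ext ⟨x, y⟩
  simp [SimpleGraph.mem_interedges_iff, or_and_right]

lemma interedges_union_right' {V : Type*} [DecidableEq V] (G : SimpleGraph V)
    [DecidableRel G.Adj] (s t t' : Finset V) :
    G.interedges s (t ∪ t') = G.interedges s t ∪ G.interedges s t' := by
  ext ⟨x, y⟩
  simp only [SimpleGraph.mem_interedges_iff, mem_union]
  tauto

lemma card_interedges_split {V : Type*} [DecidableEq V] (G : SimpleGraph V)
    [DecidableRel G.Adj] {A B X Y : Finset V} (hX : X ⊆ A) (hY : Y ⊆ B) :
    (G.interedges A B).card = (G.interedges X Y).card + (G.interedges X (B \ Y)).card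
      + (G.interedges (A \ X) Y).card + (G.interedges (A \ X) (B \ Y)).card := by
  have hA : A = X ∪ (A \ X) := (union_sdiff_of_subset hX).symm
  have hB : B = Y ∪ (B \ Y) := (union_sdiff_of_subset hY).symm
  have hdX : Disjoint X (A \ X) := disjoint_sdiff
  have hdY : Disjoint Y (B \ Y) := disjoint_sdiff
  calc (G.interedges A B).card
      = (G.interedges X B).card + (G.interedges (A \ X) B).card := by
        conv_lhs => rw [hA, interedges_union_left']
        exact card_union_of_disjoint (G.interedges_disjoint_left hdX _)
    _ = _ := by
        conv_lhs => rw [hB, interedges_union_right', interedges_union_right',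
          card_union_of_disjoint (G.interedges_disjoint_right _ hdY),
          card_union_of_disjoint (G.interedges_disjoint_right _ hdY)]
        ring

set_option maxHeartbeats 1000000 in
theorem energy_increment {V : Type*} [DecidableEq V]
    (G : SimpleGraph V) [DecidableRel G.Adj] (ε : ℝ) (hε : 0 < ε)
    (A B : Finset V) (hdisj : Disjoint A B) (hA : A.Nonempty) (hB : B.Nonempty)
    (X Y : Finset V) (hX : X ⊆ A) (hY : Y ⊆ B)
    (hXbig : ε * A.card < (X.card : ℝ)) (hYbig : ε * B.card < (Y.card : ℝ))
    (hwitness : ε ≤ |eDens G X Y - eDens G A B|) :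
    (eDens G A B) ^ 2 + ε ^ 4 ≤
      (((X.card : ℝ) * (Y.card : ℝ) / ((A.card : ℝ) * (B.card : ℝ))) * (eDens G X Y) ^ 2 +
       ((X.card : ℝ) * (((B \ Y).card : ℝ)) / ((A.card : ℝ) * (B.card : ℝ))) * (eDens G X (B \ Y)) ^ 2 +
       (((A \ X).card : ℝ) * ((Y.card : ℝ)) / ((A.card : ℝ) * (B.card : ℝ))) * (eDens G (A \ X) Y) ^ 2 +
       (((A \ X).card : ℝ) * (((B \ Y).card : ℝ)) / ((A.card : ℝ) * (B.card : ℝ))) * (eDens G (A \ X) (B \ Y)) ^ 2) := by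
  have hA0 : (0:ℝ) < A.card := by exact_mod_cast hA.card_pos
  have hB0 : (0:ℝ) < B.card := by exact_mod_cast hB.card_pos
  have hAB : (0:ℝ) < (A.card : ℝ) * B.card := mul_pos hA0 hB0
  set d : ℝ := eDens G A B with hd
  -- key identity: weight times density equals edge count over |A||B|
  have key : ∀ s t : Finset V,
      ((s.card : ℝ) * t.card / ((A.card : ℝ) * B.card)) * eDens G s t
        = ((G.interedges s t).card : ℝ) / ((A.card : ℝ) * B.card) := by
    intro s t
    rcases eq_or_ne ((s.card : ℝ) * t.card) 0 with h | h
    · have he : ((G.interedges s t).card : ℝ) = 0 := by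
        have hle : (G.interedges s t).card ≤ s.card * t.card :=
          Rel.card_interedges_le_mul _ s t
        have : ((s.card : ℝ) * t.card) = ((s.card * t.card : ℕ) : ℝ) := by push_cast; ring
        rw [this] at h
        have : s.card * t.card = 0 := by exact_mod_cast h
        have : (G.interedges s t).card = 0 := by omega
        exact_mod_cast this
      simp [h, he]
    · rw [eDens, div_mul_div_comm, mul_comm ((s.card : ℝ) * t.card),
        mul_div_mul_right _ _ h]
  -- per-pair inequality
  have ineq : ∀ s t : Finset V,
      2 * d * (((G.interedges s t).card : ℝ) / ((A.card : ℝ) * B.card))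
        - ((s.card : ℝ) * t.card / ((A.card : ℝ) * B.card)) * d ^ 2
      ≤ ((s.card : ℝ) * t.card / ((A.card : ℝ) * B.card)) * eDens G s t ^ 2 := by
    intro s t
    have h0 : 0 ≤ ((s.card : ℝ) * t.card / ((A.card : ℝ) * B.card)) * (eDens G s t - d) ^ 2 :=
      mul_nonneg (by positivity) (sq_nonneg _)
    rw [← key]
    nlinarith [h0]
  -- the first pair is strengthened by the witness
  have hw1 : (ε:ℝ)^2 ≤ (X.card : ℝ) * Y.card / ((A.card : ℝ) * B.card) := by
    rw [le_div_iff₀ hAB]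
    have h1 : 0 ≤ ε * A.card := mul_nonneg hε.le hA0.le
    nlinarith [hXbig, hYbig, mul_pos hε hB0]
  have hd1 : (ε:ℝ)^2 ≤ (eDens G X Y - d) ^ 2 := by
    have := sq_abs (eDens G X Y - d)
    nlinarith [hwitness, abs_nonneg (eDens G X Y - d)]
  have ineq1 : ε ^ 4
        + 2 * d * (((G.interedges X Y).card : ℝ) / ((A.card : ℝ) * B.card))
        - ((X.card : ℝ) * Y.card / ((A.card : ℝ) * B.card)) * d ^ 2
      ≤ ((X.card : ℝ) * Y.card / ((A.card : ℝ) * B.card)) * eDens G X Y ^ 2 := by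
    have h0 : ε ^ 4 ≤ ((X.card : ℝ) * Y.card / ((A.card : ℝ) * B.card)) * (eDens G X Y - d) ^ 2 := by
      calc ε ^ 4 = ε ^ 2 * ε ^ 2 := by ring
        _ ≤ _ := mul_le_mul hw1 hd1 (by positivity) (by positivity)
    rw [← key]
    nlinarith [h0]
  clear key
  -- weights sum to one
  have hcA : (A.card : ℝ) = (X.card : ℝ) + ((A \ X).card : ℝ) := by
    rw [card_sdiff_of_subset hX]; push_cast [card_le_card hX]; ring
  have hcB : (B.card : ℝ) = (Y.card : ℝ) + ((B \ Y).card : ℝ) := by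
    rw [card_sdiff_of_subset hY]; push_cast [card_le_card hY]; ring
  have hwsum : (X.card : ℝ) * Y.card / ((A.card : ℝ) * B.card)
      + (X.card : ℝ) * ((B \ Y).card : ℝ) / ((A.card : ℝ) * B.card)
      + ((A \ X).card : ℝ) * (Y.card : ℝ) / ((A.card : ℝ) * B.card)
      + ((A \ X).card : ℝ) * ((B \ Y).card : ℝ) / ((A.card : ℝ) * B.card) = 1 := by
    have hnum : (X.card : ℝ) * Y.card + (X.card : ℝ) * ((B \ Y).card : ℝ)
        + ((A \ X).card : ℝ) * (Y.card : ℝ)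
        + ((A \ X).card : ℝ) * ((B \ Y).card : ℝ) = (A.card : ℝ) * B.card := by
      rw [hcA, hcB]; ring
    rw [← add_div, ← add_div, ← add_div, hnum, div_self hAB.ne']
  -- edge counts sum
  have hesum : ((G.interedges X Y).card : ℝ) / ((A.card : ℝ) * B.card)
      + ((G.interedges X (B \ Y)).card : ℝ) / ((A.card : ℝ) * B.card)
      + ((G.interedges (A \ X) Y).card : ℝ) / ((A.card : ℝ) * B.card)
      + ((G.interedges (A \ X) (B \ Y)).card : ℝ) / ((A.card : ℝ) * B.card) = d := by
    rw [← add_div, ← add_div, ← add_div, hd, eDens]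
    congr 1
    rw [card_interedges_split G hX hY]
    push_cast
    ring
  have i2 := ineq X (B \ Y)
  have i3 := ineq (A \ X) Y
  have i4 := ineq (A \ X) (B \ Y)
  have h5 : 2 * d * (((G.interedges X Y).card : ℝ) / ((A.card : ℝ) * B.card)
      + ((G.interedges X (B \ Y)).card : ℝ) / ((A.card : ℝ) * B.card)
      + ((G.interedges (A \ X) Y).card : ℝ) / ((A.card : ℝ) * B.card)
      + ((G.interedges (A \ X) (B \ Y)).card : ℝ) / ((A.card : ℝ) * B.card)) = 2 * d * d := by
    rw [hesum]
  have h6 : d ^ 2 * ((X.card : ℝ) * Y.card / ((A.card : ℝ) * B.card)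
      + (X.card : ℝ) * ((B \ Y).card : ℝ) / ((A.card : ℝ) * B.card)
      + ((A \ X).card : ℝ) * (Y.card : ℝ) / ((A.card : ℝ) * B.card)
      + ((A \ X).card : ℝ) * ((B \ Y).card : ℝ) / ((A.card : ℝ) * B.card)) = d ^ 2 := by
    rw [hwsum, mul_one]
  linarith [ineq1, i2, i3, i4, h5, h6]
end

section
/- (Szemerédi's regularity lemma) For every ε > 0 and every positive integer m, there exist integers N and M such that every graph G with at least N vertices admits an ε-regular equitable partition of its vertex set into k+1 classes C_0, C_1, ..., C_k with m ≤ k ≤ M, where |C_0| < ε|V|, all classes C_1,...,C_k have equal size, and all but at most εk² of the pairs (C_i, C_j), 1 ≤ i < j ≤ k, are ε-regular. -/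
open Finset
lemma eDens_eq {V : Type*} [DecidableEq V] (G : SimpleGraph V) [DecidableRel G.Adj]
    (X Y : Finset V) : eDens G X Y = (G.edgeDensity X Y : ℝ) := by
  simp [eDens, SimpleGraph.edgeDensity, Rel.edgeDensity, SimpleGraph.interedges]

lemma key_reg {V : Type*} [DecidableEq V] (G : SimpleGraph V) [DecidableRel G.Adj]
    {ε : ℝ} (hε : 0 < ε) {n : ℕ} (hn : 1 ≤ n) {A B A' B' : Finset V}
    (hA : A' ⊆ A) (hB : B' ⊆ B) (hA' : A'.card = n) (hB' : B'.card = n)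
    (hAc : A.card ≤ n + 1) (hBc : B.card ≤ n + 1)
    (hU : G.IsUniform (min ε 1 / 2) A B) : IsEpsRegular G ε A' B' := by
  set εm := min ε 1 / 2 with hεm
  have hεm0 : 0 < εm := div_pos (lt_min hε one_pos) two_pos
  have hεmε : εm ≤ ε / 2 := by
    rw [hεm]; gcongr; exact min_le_left _ _
  have hεm1 : εm ≤ 1 / 2 := by
    rw [hεm]; gcongr; exact min_le_right _ _
  intro X hX Y hY hXc hYc
  rw [hA'] at hXc
  rw [hB'] at hYc
  have hn' : (1 : ℝ) ≤ n := by exact_mod_cast hn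
  have hbound : ∀ W : Finset V, W.card ≤ n + 1 → (W.card : ℝ) * εm ≤ (n : ℝ) * ε := by
    intro W hW
    have hWr : (W.card : ℝ) ≤ (n : ℝ) + 1 := by exact_mod_cast hW
    nlinarith [hεm0.le, Nat.cast_nonneg (α := ℝ) W.card, hε.le]
  have hbX : (A.card : ℝ) * εm ≤ X.card := (hbound A hAc).trans (by linarith)
  have hbY : (B.card : ℝ) * εm ≤ Y.card := (hbound B hBc).trans (by linarith)
  have hbA : (A.card : ℝ) * εm ≤ A'.card := by
    rw [hA']
    have : (A.card : ℝ) ≤ (n : ℝ) + 1 := by exact_mod_cast hAc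
    nlinarith [hεm0.le]
  have hbB : (B.card : ℝ) * εm ≤ B'.card := by
    rw [hB']
    have : (B.card : ℝ) ≤ (n : ℝ) + 1 := by exact_mod_cast hBc
    nlinarith [hεm0.le]
  have h1 := hU (hX.trans hA) (hY.trans hB) hbX hbY
  have h2 := hU hA hB hbA hbB
  rw [eDens_eq, eDens_eq]
  have htri : |(G.edgeDensity X Y : ℝ) - (G.edgeDensity A' B' : ℝ)| ≤
      |(G.edgeDensity X Y : ℝ) - (G.edgeDensity A B : ℝ)| +
      |(G.edgeDensity A' B' : ℝ) - (G.edgeDensity A B : ℝ)| := by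
    rw [abs_sub_comm (G.edgeDensity A' B' : ℝ)]
    exact abs_sub_le _ _ _
  have hmin : min ε 1 ≤ ε := min_le_left _ _
  calc |(G.edgeDensity X Y : ℝ) - (G.edgeDensity A' B' : ℝ)| ≤ _ := htri
    _ < εm + εm := by linarith
    _ ≤ ε := by rw [hεm]; linarith

theorem szemeredi_regularity_lemma (ε : ℝ) (hε : 0 < ε) (m : ℕ) (hm : 0 < m) :
    ∃ N M : ℕ, ∀ (V : Type) [Fintype V] [DecidableEq V]
      (G : SimpleGraph V) [DecidableRel G.Adj],
      N ≤ Fintype.card V →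
      ∃ k : ℕ, m ≤ k ∧ k ≤ M ∧
        ∃ C : Fin (k + 1) → Finset V,
          (∀ i j, i ≠ j → Disjoint (C i) (C j)) ∧
          (Finset.univ.biUnion C = Finset.univ) ∧
          ((C 0).card : ℝ) < ε * Fintype.card V ∧
          (∀ i j : Fin (k + 1), i ≠ 0 → j ≠ 0 → (C i).card = (C j).card) ∧
          ((@Finset.filter (Fin (k + 1) × Fin (k + 1))
              (fun p => p.1 ≠ 0 ∧ p.1 < p.2 ∧ ¬ IsEpsRegular G ε (C p.1) (C p.2))
              (Classical.decPred _) Finset.univ).card : ℝ)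
            ≤ ε * (k : ℝ) ^ 2 := by
  classical
  set εm := min ε 1 / 2 with hεm_def
  have hεm0 : 0 < εm := div_pos (lt_min hε one_pos) two_pos
  set M := SzemerediRegularity.bound εm m with hM_def
  refine ⟨m + M + ⌈(M : ℝ) / ε⌉₊ + 1, M, ?_⟩
  intro V _ _ G _ hN
  have hmV : m ≤ Fintype.card V := le_trans (by omega) hN
  obtain ⟨P, hPeq, hPm, hPM, hPu⟩ := szemeredi_regularity G hεm0 hmV
  set K := P.parts.card with hK_def
  have hK0 : 0 < K := lt_of_lt_of_le hm hPm
  refine ⟨K, hPm, hPM, ?_⟩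
  set n := Fintype.card V / K with hn_def
  have hKV : K ≤ Fintype.card V := hPM.trans (le_trans (by omega) hN)
  have hn1 : 1 ≤ n := (Nat.one_le_div_iff hK0).2 hKV
  -- index the parts
  let e := P.parts.equivFin
  let part : Fin K → Finset V := fun i => (e.symm i : Finset V)
  have hpart_mem : ∀ i, part i ∈ P.parts := fun i => (e.symm i).2
  have hpart_inj : Function.Injective part := by
    intro i j h
    have : e.symm i = e.symm j := Subtype.ext h
    exact e.symm.injective this
  have hpart_lb : ∀ i, n ≤ (part i).card := by
    intro i
    have := hPeq.average_le_card_part (hpart_mem i)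
    simpa [hn_def, hK_def, Finset.card_univ] using this
  have hpart_ub : ∀ i, (part i).card ≤ n + 1 := by
    intro i
    have := hPeq.card_part_le_average_add_one (hpart_mem i)
    simpa [hn_def, hK_def, Finset.card_univ] using this
  -- choose equal-size subsets
  have hsub_ex : ∀ i : Fin K, ∃ s ⊆ part i, s.card = n :=
    fun i => Finset.exists_subset_card_eq (hpart_lb i)
  choose sub hsub_sub hsub_card using hsub_ex
  set S : Finset V := Finset.univ.biUnion sub with hS_def
  set C : Fin (K + 1) → Finset V := Fin.cases (Finset.univ \ S) sub with hC_def
  have hC0 : C 0 = Finset.univ \ S := rfl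
  have hCs : ∀ i : Fin K, C i.succ = sub i := fun i => by
    simp [hC_def]
  -- disjointness among subs
  have hsub_disj : ∀ i j : Fin K, i ≠ j → Disjoint (sub i) (sub j) := by
    intro i j hij
    exact (P.disjoint (hpart_mem i) (hpart_mem j)
      (fun h => hij (hpart_inj h))).mono (hsub_sub i) (hsub_sub j)
  have hdisj : ∀ i j : Fin (K + 1), i ≠ j → Disjoint (C i) (C j) := by
    intro i j hij
    rcases Fin.eq_zero_or_eq_succ i with rfl | ⟨i', rfl⟩ <;>
      rcases Fin.eq_zero_or_eq_succ j with rfl | ⟨j', rfl⟩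
    · exact absurd rfl hij
    · rw [hC0, hCs]
      exact Finset.sdiff_disjoint.mono_right
        (Finset.subset_biUnion_of_mem sub (Finset.mem_univ j'))
    · rw [hC0, hCs]
      exact (Finset.sdiff_disjoint.mono_right
        (Finset.subset_biUnion_of_mem sub (Finset.mem_univ i'))).symm
    · rw [hCs, hCs]
      exact hsub_disj i' j' (fun h => hij (by rw [h]))
  refine ⟨C, hdisj, ?_, ?_, ?_, ?_⟩
  · -- cover
    apply Finset.eq_univ_of_forall
    intro x
    rw [Finset.mem_biUnion]
    by_cases hx : x ∈ S
    · rw [hS_def, Finset.mem_biUnion] at hx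
      obtain ⟨i, _, hxi⟩ := hx
      exact ⟨i.succ, Finset.mem_univ _, by rw [hCs]; exact hxi⟩
    · exact ⟨0, Finset.mem_univ _, by rw [hC0]; exact Finset.mem_sdiff.2 ⟨Finset.mem_univ _, hx⟩⟩
  · -- exceptional set small
    have hScard : S.card = K * n := by
      rw [hS_def, Finset.card_biUnion (fun i _ j _ hij => hsub_disj i j hij)]
      simp [hsub_card, Finset.card_univ, mul_comm]
    have hC0card : (C 0).card ≤ K := by
      rw [hC0, Finset.card_sdiff_of_subset (Finset.subset_univ S), Finset.card_univ, hScard]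
      have hsum : Fintype.card V ≤ K * (n + 1) := by
        have h1 : ∑ A ∈ P.parts, A.card = Fintype.card V := by
          rw [P.sum_card_parts, Finset.card_univ]
        have h2 : ∑ A ∈ P.parts, A.card ≤ ∑ A ∈ P.parts, (n + 1) := by
          apply Finset.sum_le_sum
          intro A hA
          obtain ⟨i, hi⟩ := e.symm.surjective ⟨A, hA⟩
          have : part i = A := congrArg Subtype.val hi
          rw [← this]; exact hpart_ub i
        rw [h1, Finset.sum_const, smul_eq_mul] at h2
        exact h2
      have hsum' : Fintype.card V ≤ K * n + K := by
        rw [Nat.mul_add, Nat.mul_one] at hsum; exact hsum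
      omega
    have hMV : (M : ℝ) < ε * Fintype.card V := by
      have hNle : (⌈(M : ℝ) / ε⌉₊ + 1 : ℝ) ≤ Fintype.card V := by
        have : ⌈(M : ℝ) / ε⌉₊ + 1 ≤ Fintype.card V := le_trans (by omega) hN
        exact_mod_cast this
      have hceil : (M : ℝ) / ε ≤ ⌈(M : ℝ) / ε⌉₊ := Nat.le_ceil _
      have : (M : ℝ) / ε < Fintype.card V := by linarith
      calc (M : ℝ) = (M : ℝ) / ε * ε := by field_simp
        _ < (Fintype.card V : ℝ) * ε := by
            apply mul_lt_mul_of_pos_right this hε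
        _ = ε * Fintype.card V := mul_comm _ _
    calc ((C 0).card : ℝ) ≤ K := by exact_mod_cast hC0card
      _ ≤ M := by exact_mod_cast hPM
      _ < ε * Fintype.card V := hMV
  · -- equal sizes
    intro i j hi hj
    obtain ⟨i', rfl⟩ := (Fin.eq_zero_or_eq_succ i).resolve_left hi
    obtain ⟨j', rfl⟩ := (Fin.eq_zero_or_eq_succ j).resolve_left hj
    rw [hCs, hCs, hsub_card, hsub_card]
  · -- irregular pairs count
    rw [Finset.filter_congr_decidable]
    set T := (@Finset.filter (Fin (K + 1) × Fin (K + 1))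
        (fun p => p.1 ≠ 0 ∧ p.1 < p.2 ∧ ¬ IsEpsRegular G ε (C p.1) (C p.2))
        _ Finset.univ) with hT_def
    let part' : Fin (K + 1) → Finset V := Fin.cases ∅ part
    have hpart's : ∀ i : Fin K, part' i.succ = part i := fun i => by simp [part']
    have hTcard : T.card ≤ (P.nonUniforms G εm).card := by
      apply Finset.card_le_card_of_injOn (fun p => (part' p.1, part' p.2))
      · intro p hp
        show (part' p.1, part' p.2) ∈ P.nonUniforms G εm
        rw [Finset.mem_coe, hT_def, Finset.mem_filter] at hp
        obtain ⟨-, h1, hlt, hirr⟩ := hp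
        obtain ⟨i', hi'⟩ := (Fin.eq_zero_or_eq_succ p.1).resolve_left h1
        have h2 : p.2 ≠ 0 := by
          intro h
          rw [h] at hlt
          exact absurd hlt (Fin.not_lt_zero _)
        obtain ⟨j', hj'⟩ := (Fin.eq_zero_or_eq_succ p.2).resolve_left h2
        rw [hi', hj', hpart's, hpart's]
        have hne : part i' ≠ part j' := by
          intro h
          have : i' = j' := hpart_inj h
          rw [hi', hj', this] at hlt
          exact lt_irrefl _ hlt
        rw [Finpartition.mk_mem_nonUniforms]
        refine ⟨hpart_mem i', hpart_mem j', hne, ?_⟩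
        intro hU
        apply hirr
        rw [hi', hj', hCs, hCs]
        exact key_reg G hε hn1 (hsub_sub i') (hsub_sub j') (hsub_card i') (hsub_card j')
          (hpart_ub i') (hpart_ub j') hU
      · intro p hp q hq hpq
        rw [Finset.mem_coe, hT_def, Finset.mem_filter] at hp hq
        obtain ⟨-, hp1, hplt, -⟩ := hp
        obtain ⟨-, hq1, hqlt, -⟩ := hq
        obtain ⟨i', hi'⟩ := (Fin.eq_zero_or_eq_succ p.1).resolve_left hp1
        obtain ⟨j', hj'⟩ := (Fin.eq_zero_or_eq_succ q.1).resolve_left hq1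
        have hp2 : p.2 ≠ 0 := fun h => by rw [h] at hplt; exact (Fin.not_lt_zero _ hplt)
        have hq2 : q.2 ≠ 0 := fun h => by rw [h] at hqlt; exact (Fin.not_lt_zero _ hqlt)
        obtain ⟨i2, hi2⟩ := (Fin.eq_zero_or_eq_succ p.2).resolve_left hp2
        obtain ⟨j2, hj2⟩ := (Fin.eq_zero_or_eq_succ q.2).resolve_left hq2
        have h1 : part' p.1 = part' q.1 := congrArg Prod.fst hpq
        have h2 : part' p.2 = part' q.2 := congrArg Prod.snd hpq
        rw [hi', hj', hpart's, hpart's] at h1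
        rw [hi2, hj2, hpart's, hpart's] at h2
        have e1 : p.1 = q.1 := by rw [hi', hj', hpart_inj h1]
        have e2 : p.2 = q.2 := by rw [hi2, hj2, hpart_inj h2]
        exact Prod.ext e1 e2
    have hnu : ((P.nonUniforms G εm).card : ℝ) ≤ (K * (K - 1) : ℕ) * εm := hPu
    calc (T.card : ℝ) ≤ (P.nonUniforms G εm).card := by exact_mod_cast hTcard
      _ ≤ (K * (K - 1) : ℕ) * εm := hnu
      _ ≤ ε * (K : ℝ) ^ 2 := by
          have h1 : ((K * (K - 1) : ℕ) : ℝ) ≤ (K : ℝ) ^ 2 := by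
            have : K * (K - 1) ≤ K ^ 2 := by
              calc K * (K - 1) ≤ K * K := Nat.mul_le_mul_left _ (Nat.sub_le _ _)
                _ = K ^ 2 := (sq K).symm
            exact_mod_cast this
          have h2 : εm ≤ ε := by
            rw [hεm_def]
            have := min_le_left ε 1
            linarith
          have h3 : (0:ℝ) ≤ ((K * (K - 1) : ℕ) : ℝ) := Nat.cast_nonneg _
          nlinarith [sq_nonneg (K : ℝ)]
end
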